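/- For all integers 0 ≤ j ≤ n, the q-Stirling number of the first kind has the explicit formula s_1(n,j,q) = (q^{C(n,2)}/(q−1)^{n−j}) · Σ_{k=j}^n (−1)^{n−k} q^{C(k+1,2) − n·k} binom(n,k)_q C(k,j). (Theorem 3, first assertion.) -/

import Mathlib

/-!
Multiplying each factor `T - [i]_q` by `1 - q` gives `Y + q^i` with `Y = (1 - q)T - 1`, so
`(1 - q)^n ∏_{i<n} (T - [i]_q) = ∏_{i<n} (Y + q^i)`. Cauchy's q-binomial theorem expands the
right side as `∑_m q^{C(n-m,2)} binom(n,m)_q Y^m`, and the coefficient of `T^j` in `Y^m` is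
`(-1)^{m-j} C(m,j) (1 - q)^j`. The stated form follows from
`C(n-m,2) = C(n,2) + C(m+1,2) - nm`.
-/

/-- The q-analogue `[n]_q = (1 - q^n)/(1 - q)` of a natural number. -/
def qnum {K : Type*} [Field K] (q : K) (n : ℕ) : K := (1 - q ^ n) / (1 - q)

/-- The q-factorial `[n]_q! = ∏_{j=1}^n [j]_q`. -/
def qfact {K : Type*} [Field K] (q : K) (n : ℕ) : K :=
  ∏ j ∈ Finset.range n, qnum q (j + 1)

/-- The Gaussian binomial coefficient, `0` for `k > n`. -/
def qbinom {K : Type*} [Field K] (q : K) (n k : ℕ) : K :=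
  if k ≤ n then qfact q n / (qfact q k * qfact q (n - k)) else 0

/-- The q-Stirling number of the first kind: the coefficient of `T^k` in
`∏_{j=0}^{n-1} (T - [j]_q)`. -/
noncomputable def qStirling1 {K : Type*} [Field K] (q : K) (n k : ℕ) : K :=
  (∏ j ∈ Finset.range n, (Polynomial.X - Polynomial.C (qnum q j))).coeff k

open Polynomial Finset

lemma cast_choose_two_sub {m n : ℕ} (h : m ≤ n) :
    ((n - m).choose 2 : ℤ) = n.choose 2 + (((m + 1).choose 2 : ℤ) - n * m) := by
  have hℚ : (((n - m).choose 2 : ℤ) : ℚ) =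
      ((n.choose 2 + ((m + 1).choose 2 - n * m) : ℤ) : ℚ) := by
    push_cast [Nat.cast_sub h, Nat.cast_choose_two]
    ring
  exact_mod_cast hℚ

lemma coeff_C_mul_X_sub_one_pow {R : Type*} [CommRing R] (t : R) (m j : ℕ) :
    ((C t * X - 1) ^ m).coeff j = (-1) ^ (m - j) * m.choose j * t ^ j := by
  have h : (C t * X - 1 : R[X]) ^ m = ((X + C (-1 : R)) ^ m).comp (C t * X) := by
    simp [sub_eq_add_neg]
  rw [h, comp_C_mul_X_coeff, coeff_X_add_C_pow]

section
variable {K : Type*} [Field K] {q : K}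

lemma one_sub_mul_qnum (hq : q ≠ 1) (n : ℕ) : (1 - q) * qnum q n = 1 - q ^ n :=
  mul_div_cancel₀ _ (sub_ne_zero.2 hq.symm)

lemma qnum_add (a b : ℕ) : qnum q (a + b) = qnum q a + q ^ a * qnum q b := by
  simp only [qnum, pow_add]
  ring

lemma qfact_zero : qfact q 0 = 1 := prod_range_zero _

lemma qfact_succ (n : ℕ) : qfact q (n + 1) = qfact q n * qnum q (n + 1) :=
  prod_range_succ _ _

lemma qnum_ne_zero (hq1 : q ≠ 1) {n : ℕ} (hqn : q ^ n ≠ 1) : qnum q n ≠ 0 :=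
  div_ne_zero (sub_ne_zero.2 hqn.symm) (sub_ne_zero.2 hq1.symm)

lemma qfact_ne_zero (hq : ∀ n : ℕ, 1 ≤ n → q ^ n ≠ 1) (n : ℕ) : qfact q n ≠ 0 :=
  prod_ne_zero_iff.2 fun i _ ↦
    qnum_ne_zero (by simpa using hq 1 le_rfl) (hq (i + 1) i.succ_pos)

lemma qbinom_zero_right (hq : ∀ n : ℕ, 1 ≤ n → q ^ n ≠ 1) (n : ℕ) : qbinom q n 0 = 1 := by
  rw [qbinom, if_pos n.zero_le, qfact_zero, one_mul, Nat.sub_zero,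
    div_self (qfact_ne_zero hq n)]

lemma qbinom_self (hq : ∀ n : ℕ, 1 ≤ n → q ^ n ≠ 1) (n : ℕ) : qbinom q n n = 1 := by
  rw [qbinom, if_pos le_rfl, Nat.sub_self, qfact_zero, mul_one, div_self (qfact_ne_zero hq n)]

lemma qbinom_of_lt {n k : ℕ} (h : n < k) : qbinom q n k = 0 :=
  if_neg h.not_ge

lemma qbinom_succ_succ (hq : ∀ n : ℕ, 1 ≤ n → q ^ n ≠ 1) (n k : ℕ) :
    qbinom q (n + 1) (k + 1) = qbinom q n k + q ^ (k + 1) * qbinom q n (k + 1) := by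
  rcases lt_trichotomy k n with hkn | rfl | hnk
  · obtain ⟨a, rfl⟩ := Nat.exists_eq_add_of_lt hkn
    simp only [qbinom, if_pos (show k + 1 ≤ k + a + 1 + 1 by omega),
      if_pos (show k ≤ k + a + 1 by omega), if_pos (show k + 1 ≤ k + a + 1 by omega),
      show k + a + 1 + 1 - (k + 1) = a + 1 by omega, show k + a + 1 - k = a + 1 by omega,
      show k + a + 1 - (k + 1) = a by omega]
    have hsum : qnum q (k + a + 1 + 1) = qnum q (k + 1) + q ^ (k + 1) * qnum q (a + 1) := by
      rw [← qnum_add]; ring_nf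
    obtain ⟨hfk, hnk⟩ := mul_ne_zero_iff.1 (qfact_succ (q := q) k ▸ qfact_ne_zero hq (k + 1))
    obtain ⟨hfa, hna⟩ := mul_ne_zero_iff.1 (qfact_succ (q := q) a ▸ qfact_ne_zero hq (a + 1))
    rw [qfact_succ (k + a + 1), qfact_succ k, qfact_succ a, hsum]
    field_simp
  · rw [qbinom_self hq, qbinom_self hq, qbinom_of_lt (Nat.lt_succ_self k), mul_zero, add_zero]
  · rw [qbinom_of_lt (by omega), qbinom_of_lt hnk, qbinom_of_lt (by omega), mul_zero, add_zero]

lemma qpow_choose_two_mul_qbinom_succ_succ (hq : ∀ n : ℕ, 1 ≤ n → q ^ n ≠ 1) (n m : ℕ) :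
    q ^ (n - m).choose 2 * qbinom q (n + 1) (m + 1) =
      q ^ (n - m).choose 2 * qbinom q n m +
        q ^ n * (q ^ (n - (m + 1)).choose 2 * qbinom q n (m + 1)) := by
  rw [qbinom_succ_succ hq, mul_add]
  congr 1
  rcases lt_or_ge m n with h | h
  · obtain ⟨a, rfl⟩ := Nat.exists_eq_add_of_lt h
    rw [show m + a + 1 - m = a + 1 by omega, show m + a + 1 - (m + 1) = a by omega,
      Nat.choose_succ_succ a 1, Nat.choose_one_right]
    ring
  · rw [qbinom_of_lt (Nat.lt_succ_of_le h)]
    ring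

theorem prod_add_algebraMap_pow_eq_sum_qbinom (hq : ∀ n : ℕ, 1 ≤ n → q ^ n ≠ 1)
    {A : Type*} [CommRing A] [Algebra K A] (x : A) (n : ℕ) :
    ∏ i ∈ range n, (x + algebraMap K A (q ^ i)) =
      ∑ m ∈ range (n + 1), algebraMap K A (q ^ (n - m).choose 2 * qbinom q n m) * x ^ m := by
  induction n with
  | zero => simp [qbinom_self hq]
  | succ n ih =>
    have hc0 : q ^ (n + 1).choose 2 * qbinom q (n + 1) 0 =
        q ^ n * (q ^ n.choose 2 * qbinom q n 0) := by
      rw [qbinom_zero_right hq, qbinom_zero_right hq, Nat.choose_succ_succ n 1,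
        Nat.choose_one_right, pow_add]
      ring
    calc ∏ i ∈ range (n + 1), (x + algebraMap K A (q ^ i))
        = ∑ m ∈ range (n + 1),
              algebraMap K A (q ^ (n - m).choose 2 * qbinom q n m) * x ^ (m + 1) +
            algebraMap K A (q ^ n) * ∑ m ∈ range (n + 1),
              algebraMap K A (q ^ (n - m).choose 2 * qbinom q n m) * x ^ m := by
          rw [prod_range_succ, ih, mul_add, sum_mul, mul_comm _ (algebraMap K A _)]
          simp only [pow_succ, mul_assoc]
      _ = ∑ m ∈ range (n + 1),
              algebraMap K A (q ^ (n - m).choose 2 * qbinom q n m) * x ^ (m + 1) +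
            algebraMap K A (q ^ n) *
              (∑ m ∈ range (n + 1), algebraMap K A
                (q ^ (n - (m + 1)).choose 2 * qbinom q n (m + 1)) * x ^ (m + 1) +
              algebraMap K A (q ^ n.choose 2 * qbinom q n 0)) := by
          congr 2
          symm
          rw [sum_range_succ, qbinom_of_lt (Nat.lt_succ_self n), sum_range_succ' _ n]
          simp
      _ = _ := by
          rw [sum_range_succ' _ (n + 1), Nat.sub_zero, hc0]
          simp only [Nat.add_sub_add_right, qpow_choose_two_mul_qbinom_succ_succ hq, map_add,
            map_mul, add_mul, sum_add_distrib, mul_add, mul_sum, mul_assoc, pow_zero, mul_one]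
          ring

lemma C_pow_mul_prod_X_sub_C_qnum (hq : q ≠ 1) (n : ℕ) :
    C ((1 - q) ^ n) * ∏ i ∈ range n, (X - C (qnum q i)) =
      ∏ i ∈ range n, (C (1 - q) * X - 1 + C (q ^ i)) := by
  rw [C_pow, ← card_range n, ← prod_const, card_range, ← prod_mul_distrib]
  refine prod_congr rfl fun i _ ↦ ?_
  rw [mul_sub, ← C_mul, one_sub_mul_qnum hq]
  simp only [C_sub, C_1]
  ring

lemma one_sub_pow_mul_qStirling1 (hq : ∀ n : ℕ, 1 ≤ n → q ^ n ≠ 1) (n j : ℕ) :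
    (1 - q) ^ n * qStirling1 q n j = ∑ m ∈ range (n + 1),
      q ^ (n - m).choose 2 * qbinom q n m * ((-1) ^ (m - j) * m.choose j * (1 - q) ^ j) := by
  rw [qStirling1, ← coeff_C_mul, C_pow_mul_prod_X_sub_C_qnum (by simpa using hq 1 le_rfl),
    ← algebraMap_eq, prod_add_algebraMap_pow_eq_sum_qbinom hq, finsetSum_coeff]
  simp only [algebraMap_eq, coeff_C_mul, coeff_C_mul_X_sub_one_pow]

end

theorem qStirling1_explicit_general
    {K : Type*} [Field K] (q : K) (hq0 : q ≠ 0)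
    (hq : ∀ n : ℕ, 1 ≤ n → q ^ n ≠ 1) (n j : ℕ) :
    qStirling1 q n j = q ^ Nat.choose n 2 / (q - 1) ^ (n - j) *
      ∑ k ∈ Finset.Icc j n, (-1 : K) ^ (n - k) *
        q ^ ((Nat.choose (k + 1) 2 : ℤ) - (n : ℤ) * (k : ℤ)) *
        qbinom q n k * (Nat.choose k j : K) := by
  have hq1 : q ≠ 1 := by simpa using hq 1 le_rfl
  refine mul_left_cancel₀ (pow_ne_zero n (sub_ne_zero.2 hq1.symm)) ?_
  rw [one_sub_pow_mul_qStirling1 hq, mul_sum, mul_sum]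
  rw [← sum_subset (s₁ := Icc j n) (fun m hm ↦ mem_range.2 (by simp at hm; omega))
    (fun m hm hm' ↦ by
      have hmj : m < j := by simp at hm hm'; omega
      simp [Nat.choose_eq_zero_of_lt hmj])]
  refine sum_congr rfl fun m hm ↦ ?_
  obtain ⟨hjm, hmn⟩ := mem_Icc.1 hm
  have hpow : q ^ (n - m).choose 2 =
      q ^ n.choose 2 * q ^ (((m + 1).choose 2 : ℤ) - n * m) := by
    rw [← zpow_natCast, cast_choose_two_sub hmn, zpow_add₀ hq0, zpow_natCast]
  have hsign : (-1 : K) ^ (n - j) * (-1) ^ (n - m) = (-1) ^ (m - j) := by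
    rw [show n - j = (m - j) + (n - m) by omega, pow_add, mul_assoc, ← pow_add, ← two_mul,
      pow_mul, neg_one_sq, one_pow, mul_one]
  have hscale : (1 - q) ^ n / (q - 1) ^ (n - j) = (-1) ^ (n - j) * (1 - q) ^ j := by
    rw [← pow_sub_mul_pow _ (hjm.trans hmn), show q - 1 = -1 * (1 - q) by ring, mul_pow]
    field_simp
    rw [← pow_mul, mul_comm, pow_mul, neg_one_sq, one_pow]
  rw [hpow, ← hsign]
  linear_combination (-q ^ n.choose 2 * q ^ (((m + 1).choose 2 : ℤ) - n * m) * qbinom q n m *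
    (-1) ^ (n - m) * m.choose j) * hscale

/-- **Theorem 3, first assertion**: for `0 ≤ j ≤ n`, the q-Stirling number of the
first kind has the explicit formula
`s_1(n,j,q) = (q^{C(n,2)}/(q-1)^{n-j}) Σ_{k=j}^n (-1)^{n-k} q^{C(k+1,2)-nk} binom(n,k)_q C(k,j)`. -/
theorem qStirling1_explicit
    {K : Type*} [Field K] [CharZero K] (q : K) (hq0 : q ≠ 0)
    (hq : ∀ n : ℕ, 1 ≤ n → q ^ n ≠ 1) (n j : ℕ) (hj : j ≤ n) :
    qStirling1 q n j = q ^ Nat.choose n 2 / (q - 1) ^ (n - j) *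
      ∑ k ∈ Finset.Icc j n, (-1 : K) ^ (n - k) *
        q ^ ((Nat.choose (k + 1) 2 : ℤ) - (n : ℤ) * (k : ℤ)) *
        qbinom q n k * (Nat.choose k j : K) :=
  qStirling1_explicit_general q hq0 hq n j
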